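/- For every integer n ≥ 2, the ℚ-vector space VG_n^{S_n} of S_n-invariant elements of VG_n has dimension n + 1. -/

import Mathlib

/-!
The powers `1, z, …, zⁿ` of `z = x_{1,n+1} + ⋯ + x_{n,n+1}` form a basis of `VG_n^{S_n}`.

They span. For `a ∉ U` let `B_U` be the subalgebra generated by the `x_{ij}` with `i, j ∈ U`
and `z_{U,a} = ∑_{j ∈ U} x_{ja}`. Averaging over the permutations of `U` maps `B_{U ∪ {a}}` into
`ℚ[z_{U,a}]`, by induction on `U`: `B_{U ∪ {a}}` is spanned by `B_U` and the `B_U x_{ia}`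
(`i ∈ U`), averaging over `U` factors through averaging over `U ∖ {i}`, and the star identities
`∑_{b ∈ T} ∏_{j ∈ T∖b} x_{jb} = 0` (`|T| ≥ 2`) and
`∑_{b ∈ T} (∏_{j ∈ T∖b} x_{jb}) x_{ba} = ∏_{j ∈ T} x_{ja}` (`T ≠ ∅`) show that the averages of
`z_{U∖i,i}^{k+1}` and `z_{U∖i,i}^k x_{ia}` are `0` and a multiple of `z_{U,a}^{k+1}`.

They are independent: `z^{n+1} = 0`, so it suffices that `zⁿ ≠ 0`, which is seen in
`ℚ[t_1, …, t_{n+1}]/(t_i²)` through `x_{ij} ↦ t_i` (`i < j`), where `zⁿ ↦ n! t_1 ⋯ t_n`.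
-/

noncomputable section

/-- Index set for the variables `x_{ij}` with `i ≠ j` in `{1, …, n+1}` (as `Fin (n+1)`). -/
abbrev VGidx (n : ℕ) := {p : Fin (n+1) × Fin (n+1) // p.1 ≠ p.2}

/-- The defining ideal of the Varchenko–Gel'fand ring of the braid arrangement `A_n`. -/
def VGrel (n : ℕ) : Ideal (MvPolynomial (VGidx n) ℚ) :=
  Ideal.span
    ({q | ∃ v : VGidx n, q = MvPolynomial.X v ^ 2} ∪
     {q | ∃ (i j : Fin (n+1)) (hij : i ≠ j),
        q = MvPolynomial.X (⟨(i,j),hij⟩ : VGidx n) + MvPolynomial.X ⟨(j,i),hij.symm⟩} ∪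
     {q | ∃ (i j k : Fin (n+1)) (hij : i ≠ j) (hjk : j ≠ k) (hki : k ≠ i),
        q = MvPolynomial.X (⟨(i,j),hij⟩ : VGidx n) * MvPolynomial.X ⟨(j,k),hjk⟩
          + MvPolynomial.X (⟨(j,k),hjk⟩ : VGidx n) * MvPolynomial.X ⟨(k,i),hki⟩
          + MvPolynomial.X (⟨(k,i),hki⟩ : VGidx n) * MvPolynomial.X ⟨(i,j),hij⟩})

/-- The Varchenko–Gel'fand ring `VG_n`. -/
abbrev VG (n : ℕ) := MvPolynomial (VGidx n) ℚ ⧸ VGrel n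

/-- The action of a permutation of `{1, …, n+1}` on the variable indices. -/
def VGpermIdx (n : ℕ) (σ : Equiv.Perm (Fin (n+1))) : VGidx n → VGidx n :=
  fun v => ⟨(σ v.1.1, σ v.1.2), fun h => v.2 (σ.injective h)⟩

lemma VGrel_stable (n : ℕ) (σ : Equiv.Perm (Fin (n+1))) :
    ∀ a ∈ VGrel n, (MvPolynomial.rename (VGpermIdx n σ)) a ∈ VGrel n := by
  intro a ha
  have hle : (VGrel n).map (MvPolynomial.rename (VGpermIdx n σ)).toRingHom ≤ VGrel n := by
    rw [VGrel, Ideal.map_span, Ideal.span_le]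
    rintro q ⟨p, hp, rfl⟩
    apply Ideal.subset_span
    simp only [Set.mem_union, Set.mem_setOf_eq] at hp ⊢
    rcases hp with ((⟨v, rfl⟩ | ⟨i, j, hij, rfl⟩) | ⟨i, j, k, hij, hjk, hki, rfl⟩)
    · refine Or.inl (Or.inl ⟨VGpermIdx n σ v, ?_⟩)
      simp [map_pow, MvPolynomial.rename_X]
    · refine Or.inl (Or.inr ⟨σ i, σ j, fun h => hij (σ.injective h), ?_⟩)
      simp [map_add, MvPolynomial.rename_X, VGpermIdx]
    · refine Or.inr ⟨σ i, σ j, σ k, fun h => hij (σ.injective h), fun h => hjk (σ.injective h),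
        fun h => hki (σ.injective h), ?_⟩
      simp [map_add, map_mul, MvPolynomial.rename_X, VGpermIdx]
  exact hle (Ideal.mem_map_of_mem _ ha)

/-- The algebra automorphism of `VG_n` induced by a permutation of `{1, …, n+1}`. -/
def VGperm (n : ℕ) (σ : Equiv.Perm (Fin (n+1))) : VG n →ₐ[ℚ] VG n :=
  Ideal.Quotient.liftₐ (VGrel n)
    ((Ideal.Quotient.mkₐ ℚ (VGrel n)).comp (MvPolynomial.rename (VGpermIdx n σ)))
    (fun a ha => by
      simp only [AlgHom.comp_apply, Ideal.Quotient.mkₐ_eq_mk]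
      exact Ideal.Quotient.eq_zero_iff_mem.mpr (VGrel_stable n σ a ha))

/-- The subalgebra of `S_n`-invariants of `VG_n`, where `S_n` is the subgroup of permutations
of `{1, …, n+1}` fixing `n+1`. -/
def VGinv (n : ℕ) : Subalgebra ℚ (VG n) where
  carrier := {x | ∀ σ : Equiv.Perm (Fin (n+1)), σ (Fin.last n) = Fin.last n → VGperm n σ x = x}
  mul_mem' := fun hx hy σ hσ => by rw [map_mul, hx σ hσ, hy σ hσ]
  add_mem' := fun hx hy σ hσ => by rw [map_add, hx σ hσ, hy σ hσ]
  one_mem' := fun σ _ => map_one _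
  zero_mem' := fun σ _ => map_zero _
  algebraMap_mem' := fun r σ hσ => AlgHom.commutes _ r

/-- The subalgebra of `S_{n+1}`-invariants of `VG_n`. -/
def VGinvFull (n : ℕ) : Subalgebra ℚ (VG n) where
  carrier := {x | ∀ σ : Equiv.Perm (Fin (n+1)), VGperm n σ x = x}
  mul_mem' := fun hx hy σ => by rw [map_mul, hx σ, hy σ]
  add_mem' := fun hx hy σ => by rw [map_add, hx σ, hy σ]
  one_mem' := fun σ => map_one _
  zero_mem' := fun σ => map_zero _
  algebraMap_mem' := fun r σ => AlgHom.commutes _ r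

/-- The element `z = x_{1,n+1} + x_{2,n+1} + ⋯ + x_{n,n+1}` of `VG_n`. -/
def zVG (n : ℕ) : VG n :=
  Ideal.Quotient.mk (VGrel n)
    (∑ i : Fin n, MvPolynomial.X ⟨(i.castSucc, Fin.last n), (Fin.castSucc_lt_last i).ne⟩)

open Finset Equiv MulAction
open scoped Nat Pointwise

namespace Finset

variable {ι : Type*} [DecidableEq ι]

theorem sum_sum_powersetCard_erase {M : Type*} [AddCommMonoid M] (U : Finset ι) (k : ℕ)
    (g : ι → Finset ι → M) :
    ∑ i ∈ U, ∑ S ∈ (U.erase i).powersetCard k, g i S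
      = ∑ T ∈ U.powersetCard (k + 1), ∑ b ∈ T, g b (T.erase b) := by
  rw [sum_sigma', sum_sigma']
  refine sum_bij' (fun p _ => ⟨insert p.1 p.2, p.1⟩) (fun q _ => ⟨q.2, q.1.erase q.2⟩)
    ?_ ?_ ?_ ?_ ?_ <;>
  rintro ⟨i, S⟩ h <;>
  simp only [mem_sigma, mem_powersetCard, subset_erase] at h ⊢ <;>
  grind [card_insert_of_notMem, card_erase_of_mem, insert_erase, erase_insert]

theorem sum_pow_eq_factorial_smul_sum_prod {R : Type*} [CommSemiring R] (s : Finset ι)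
    (w : ι → R) (hw : ∀ j ∈ s, w j * w j = 0) (k : ℕ) :
    (∑ j ∈ s, w j) ^ k = k ! • ∑ S ∈ s.powersetCard k, ∏ j ∈ S, w j := by
  induction k with
  | zero => simp
  | succ k ih =>
    have step : ∀ S ∈ s.powersetCard k,
        (∏ j ∈ S, w j) * ∑ i ∈ s, w i = ∑ i ∈ s \ S, ∏ j ∈ insert i S, w j := by
      intro S hS
      have hSs := (mem_powersetCard.mp hS).1
      have hzero : ∑ i ∈ S, (∏ j ∈ S, w j) * w i = 0 := sum_eq_zero fun i hi => by
        rw [← mul_prod_erase S w hi, mul_comm (w i), mul_assoc, hw i (hSs hi), mul_zero]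
      rw [mul_sum, ← sum_sdiff hSs, hzero, add_zero]
      exact sum_congr rfl fun i hi => by rw [prod_insert (mem_sdiff.mp hi).2, mul_comm]
    have hswap : ∑ S ∈ s.powersetCard k, ∑ i ∈ s \ S, ∏ j ∈ insert i S, w j
        = ∑ i ∈ s, ∑ S ∈ (s.erase i).powersetCard k, ∏ j ∈ insert i S, w j :=
      sum_comm' fun S i => by simp only [mem_powersetCard, mem_sdiff, subset_erase]; tauto
    have hcount : ∀ T ∈ s.powersetCard (k + 1),
        ∑ b ∈ T, ∏ j ∈ insert b (T.erase b), w j = (k + 1) • ∏ j ∈ T, w j := by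
      intro T hT
      rw [sum_congr rfl fun b hb => by rw [insert_erase hb], sum_const,
        (mem_powersetCard.mp hT).2]
    rw [pow_succ, ih, smul_mul_assoc, sum_mul, sum_congr rfl step, hswap,
      sum_sum_powersetCard_erase, sum_congr rfl hcount, ← smul_sum, smul_smul,
      Nat.factorial_succ, mul_comm]

end Finset

section NilpotentPowers

variable {K A : Type*} [Field K] [Ring A] [Algebra K A] {x : A} {n : ℕ}

theorem linearIndependent_pow_of_pow_succ_eq_zero (hx : x ^ (n + 1) = 0) (hxn : x ^ n ≠ 0) :
    LinearIndependent K fun k : Fin (n + 1) => x ^ (k : ℕ) := by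
  rw [Fintype.linearIndependent_iff]
  intro g hg k
  induction k using WellFoundedLT.induction with | ind k ih => ?_
  -- multiplying the relation by `x ^ (n - k)` kills every term but `g k • x ^ n`
  have hterm : ∀ j : Fin (n + 1), x ^ (n - k : ℕ) * (g j • x ^ (j : ℕ))
      = if j = k then g k • x ^ n else 0 := by
    intro j
    rw [mul_smul_comm, ← pow_add]
    rcases lt_trichotomy j k with hjk | rfl | hjk
    · rw [ih j hjk, zero_smul, if_neg hjk.ne]
    · rw [if_pos rfl, Nat.sub_add_cancel (by omega)]
    · rw [if_neg hjk.ne', pow_eq_zero_of_le (by omega) hx, smul_zero]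
  have := congrArg (x ^ (n - k : ℕ) * ·) hg
  simp only [mul_sum, hterm, sum_ite_eq', mem_univ, if_true, mul_zero] at this
  exact (smul_eq_zero.mp this).resolve_right hxn

theorem span_range_pow_eq_of_pow_succ_eq_zero (hx : x ^ (n + 1) = 0) :
    Submodule.span K (Set.range fun k : ℕ => x ^ k)
      = Submodule.span K (Set.range fun k : Fin (n + 1) => x ^ (k : ℕ)) := by
  refine le_antisymm (Submodule.span_le.mpr ?_) (Submodule.span_mono ?_)
  · rintro _ ⟨k, rfl⟩
    by_cases hk : k < n + 1
    · exact Submodule.subset_span ⟨⟨k, hk⟩, rfl⟩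
    · simp only [SetLike.mem_coe, pow_eq_zero_of_le (not_lt.mp hk) hx, Submodule.zero_mem]
  · exact Set.range_subset_iff.mpr fun k => ⟨k, rfl⟩

end NilpotentPowers

theorem MvPolynomial.prod_X_notMem_span_X_sq {σ R : Type*} [CommSemiring R] [Nontrivial R]
    (s : Finset σ) :
    ∏ i ∈ s, X i ∉ Ideal.span (Set.range fun i : σ => (X i : MvPolynomial σ R) ^ 2) := by
  classical
  have hsq : (Set.range fun i : σ => (X i : MvPolynomial σ R) ^ 2)
      = (fun m => monomial m 1) '' Set.range fun i => Finsupp.single i 2 := by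
    rw [← Set.range_comp]
    simp only [Function.comp_def, X_pow_eq_monomial]
  have hprod : ∏ i ∈ s, (X i : MvPolynomial σ R)
      = monomial (Finsupp.indicator s fun _ _ => 1) 1 := by
    rw [← prod_X_pow]
    simp
  rw [hsq, mem_ideal_span_monomial_image, hprod, support_monomial, if_neg one_ne_zero]
  simp only [Finset.mem_singleton, forall_eq, Set.mem_range, exists_exists_eq_and, not_exists]
  intro i hi
  have := hi i
  simp only [Finsupp.single_eq_same, Finsupp.indicator_apply] at this
  split_ifs at this <;> omega

namespace Equiv.Perm

variable {α : Type*} {U : Finset α} {σ : Perm α}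

theorem mem_fixingSubgroup_compl_iff :
    σ ∈ fixingSubgroup (Perm α) (U : Set α)ᶜ ↔ ∀ x ∉ U, σ x = x := by
  simp [mem_fixingSubgroup_iff]

theorem setOf_apply_ne_subset_of_mem_fixingSubgroup_compl
    (hσ : σ ∈ fixingSubgroup (Perm α) (U : Set α)ᶜ) : {x | σ x ≠ x} ⊆ U := fun x hx => by
  by_contra hxU
  exact hx (mem_fixingSubgroup_compl_iff.mp hσ x hxU)

theorem swap_mem_fixingSubgroup_compl [DecidableEq α] {i j : α} (hi : i ∈ U) (hj : j ∈ U) :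
    swap i j ∈ fixingSubgroup (Perm α) (U : Set α)ᶜ :=
  mem_fixingSubgroup_compl_iff.mpr fun _ hx =>
    swap_apply_of_ne_of_ne (fun h => hx (h ▸ hi)) (fun h => hx (h ▸ hj))

end Equiv.Perm

namespace Representation

section Average

variable {k G V : Type*} [Field k] [Group G] [Fintype G] [AddCommGroup V]
  [Module k V] (ρ : Representation k G V)

open scoped Classical in
noncomputable def subgroupAverage (H : Subgroup G) : V →ₗ[k] V :=
  (Nat.card H : k)⁻¹ • ∑ h : H, ρ h

variable {ρ} {H K : Subgroup G}

open scoped Classical in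
theorem subgroupAverage_apply (v : V) :
    ρ.subgroupAverage H v = (Nat.card H : k)⁻¹ • ∑ h : H, ρ h v := by
  simp [subgroupAverage, LinearMap.sum_apply]

theorem subgroupAverage_apply_of_forall_eq [CharZero k] {v : V} (hv : ∀ h ∈ H, ρ h v = v) :
    ρ.subgroupAverage H v = v := by
  classical
  rw [subgroupAverage_apply, sum_congr rfl fun (h : H) _ => hv h h.2, sum_const, card_univ,
    ← Nat.card_eq_fintype_card, ← Nat.cast_smul_eq_nsmul k,
    inv_smul_smul₀ (Nat.cast_ne_zero.mpr Nat.card_pos.ne')]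

theorem subgroupAverage_apply_apply {h : G} (hh : h ∈ H) (v : V) :
    ρ.subgroupAverage H (ρ h v) = ρ.subgroupAverage H v := by
  classical
  rw [subgroupAverage_apply, subgroupAverage_apply]
  congr 1
  exact Fintype.sum_equiv (Equiv.mulRight (⟨h, hh⟩ : H)) _ _ fun g => by simp

theorem subgroupAverage_subgroupAverage_of_le [CharZero k] (hKH : K ≤ H) (v : V) :
    ρ.subgroupAverage H (ρ.subgroupAverage K v) = ρ.subgroupAverage H v := by
  classical
  rw [subgroupAverage_apply (H := K), map_smul, map_sum,
    sum_congr rfl fun g _ => subgroupAverage_apply_apply (hKH g.2) v, sum_const, card_univ,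
    ← Nat.card_eq_fintype_card, ← Nat.cast_smul_eq_nsmul k,
    inv_smul_smul₀ (Nat.cast_ne_zero.mpr Nat.card_pos.ne')]

theorem map_subgroupAverage_of_commute (f : V →ₗ[k] V) (hf : ∀ h ∈ H, ∀ v, f (ρ h v) = ρ h (f v))
    (v : V) : f (ρ.subgroupAverage H v) = ρ.subgroupAverage H (f v) := by
  classical
  simp only [subgroupAverage_apply, map_smul, map_sum, fun h : H => hf h h.2 v]

end Average

section Perm

variable {k α V : Type*} [Field k] [CharZero k] [Fintype α] [DecidableEq α] [AddCommGroup V]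
  [Module k V] {ρ : Representation k (Perm α) V} {U : Finset α}

theorem subgroupAverage_fixingSubgroup_compl_apply (y : α → V)
    (hy : ∀ σ ∈ fixingSubgroup (Perm α) (U : Set α)ᶜ, ∀ i ∈ U, ρ σ (y i) = y (σ i))
    {i : α} (hi : i ∈ U) :
    ρ.subgroupAverage (fixingSubgroup (Perm α) (U : Set α)ᶜ) (y i) = (#U : k)⁻¹ • ∑ j ∈ U, y j := by
  set avg := ρ.subgroupAverage (fixingSubgroup (Perm α) (U : Set α)ᶜ)
  have hconst : ∀ j ∈ U, avg (y j) = avg (y i) := fun j hj => by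
    have hswap := Perm.swap_mem_fixingSubgroup_compl hi hj
    rw [← swap_apply_left i j, ← hy _ hswap i hi, subgroupAverage_apply_apply hswap]
  have hmean : avg (∑ j ∈ U, y j) = ∑ j ∈ U, y j := by
    refine subgroupAverage_apply_of_forall_eq fun σ hσ => ?_
    rw [map_sum, sum_congr rfl fun j hj => hy σ hσ j hj,
      Perm.sum_comp σ U y (Perm.setOf_apply_ne_subset_of_mem_fixingSubgroup_compl hσ)]
  rw [← hmean, map_sum, sum_congr rfl hconst, sum_const, ← Nat.cast_smul_eq_nsmul k,
    inv_smul_smul₀ (Nat.cast_ne_zero.mpr (card_ne_zero_of_mem hi))]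

end Perm

end Representation

open MvPolynomial

variable {n : ℕ}

def xVG (n : ℕ) (i j : Fin (n + 1)) : VG n :=
  if h : i = j then 0 else Ideal.Quotient.mk (VGrel n) (X ⟨(i, j), h⟩)

theorem mk_X_eq_xVG (v : VGidx n) :
    Ideal.Quotient.mk (VGrel n) (X v) = xVG n v.1.1 v.1.2 := by
  rw [xVG, dif_neg v.2]

@[simp]
theorem xVG_self (i : Fin (n + 1)) : xVG n i i = 0 := dif_pos rfl

@[simp]
theorem xVG_mul_self (i j : Fin (n + 1)) : xVG n i j * xVG n i j = 0 := by
  unfold xVG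
  split_ifs with h
  · exact mul_zero 0
  · rw [← map_mul, ← sq, Ideal.Quotient.eq_zero_iff_mem]
    exact Ideal.subset_span (.inl (.inl ⟨_, rfl⟩))

theorem xVG_swap (i j : Fin (n + 1)) : xVG n j i = -xVG n i j := by
  unfold xVG
  split_ifs with h h' h'
  · simp
  · exact absurd h.symm h'
  · exact absurd h'.symm h
  · rw [eq_neg_iff_add_eq_zero, ← map_add, Ideal.Quotient.eq_zero_iff_mem]
    exact Ideal.subset_span (.inl (.inr ⟨j, i, h, rfl⟩))

theorem xVG_mul_xVG (i j k : Fin (n + 1)) :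
    xVG n i j * xVG n j k = xVG n j k * xVG n i k + xVG n i k * xVG n i j := by
  by_cases hij : i = j
  · subst hij
    simp
  by_cases hjk : j = k
  · subst hjk
    simp
  by_cases hki : k = i
  · subst hki
    simp only [xVG_self, mul_zero]
    linear_combination xVG n j k * xVG_swap j k - xVG_mul_self j k
  have hrel : xVG n i j * xVG n j k + xVG n j k * xVG n k i + xVG n k i * xVG n i j = 0 := by
    simp only [xVG, dif_neg hij, dif_neg hjk, dif_neg hki, ← map_mul, ← map_add,
      Ideal.Quotient.eq_zero_iff_mem]
    exact Ideal.subset_span (.inr ⟨i, j, k, hij, hjk, hki, rfl⟩)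
  rw [xVG_swap i k] at hrel
  linear_combination hrel

theorem VGperm_mk (σ : Perm (Fin (n + 1))) (p : MvPolynomial (VGidx n) ℚ) :
    VGperm n σ (Ideal.Quotient.mk (VGrel n) p)
      = Ideal.Quotient.mk (VGrel n) (rename (VGpermIdx n σ) p) := rfl

theorem VGperm_xVG (σ : Perm (Fin (n + 1))) (i j : Fin (n + 1)) :
    VGperm n σ (xVG n i j) = xVG n (σ i) (σ j) := by
  by_cases h : i = j
  · subst h
    simp
  · rw [xVG, dif_neg h, VGperm_mk, rename_X, mk_X_eq_xVG]
    rfl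

theorem VGperm_one : VGperm n 1 = AlgHom.id ℚ (VG n) := by
  refine Ideal.Quotient.algHom_ext _ (MvPolynomial.algHom_ext fun v => ?_)
  simp [mk_X_eq_xVG, VGperm_xVG]

theorem VGperm_mul (σ τ : Perm (Fin (n + 1))) :
    VGperm n (σ * τ) = (VGperm n σ).comp (VGperm n τ) := by
  refine Ideal.Quotient.algHom_ext _ (MvPolynomial.algHom_ext fun v => ?_)
  simp [mk_X_eq_xVG, VGperm_xVG]

def VGrep (n : ℕ) : Representation ℚ (Perm (Fin (n + 1))) (VG n) where
  toFun σ := (VGperm n σ).toLinearMap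
  map_one' := by rw [VGperm_one]; rfl
  map_mul' σ τ := by rw [VGperm_mul]; rfl

@[simp]
theorem VGrep_apply (σ : Perm (Fin (n + 1))) (x : VG n) : VGrep n σ x = VGperm n σ x := rfl

theorem sum_prod_xVG_mul_xVG {T : Finset (Fin (n + 1))} (hT : T.Nonempty) (a : Fin (n + 1)) :
    ∑ b ∈ T, (∏ j ∈ T.erase b, xVG n j b) * xVG n b a = ∏ j ∈ T, xVG n j a := by
  induction hT using Nonempty.cons_induction generalizing a with
  | singleton t => simp
  | cons t T ht hT ih =>
    have hterm : ∀ b ∈ T, (∏ j ∈ (insert t T).erase b, xVG n j b) * xVG n b a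
        = xVG n t a * ((∏ j ∈ T.erase b, xVG n j b) * xVG n b a)
          - xVG n t a * ((∏ j ∈ T.erase b, xVG n j b) * xVG n b t) := by
      intro b hb
      rw [erase_insert_of_ne (ne_of_mem_of_not_mem hb ht).symm,
        prod_insert fun h => ht (mem_of_mem_erase h)]
      linear_combination (∏ j ∈ T.erase b, xVG n j b) *
        (xVG_mul_xVG t b a + xVG n t a * xVG_swap b t)
    rw [cons_eq_insert, sum_insert ht, erase_insert ht, sum_congr rfl hterm, sum_sub_distrib,
      ← mul_sum, ← mul_sum, ih a, ih t, prod_insert ht]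
    ring

theorem sum_prod_xVG_eq_zero {T : Finset (Fin (n + 1))} (hT : 1 < #T) :
    ∑ b ∈ T, ∏ j ∈ T.erase b, xVG n j b = 0 := by
  obtain ⟨t, ht⟩ := card_pos.mp (zero_lt_one.trans hT)
  have htT : t ∉ T.erase t := notMem_erase t T
  have hT' : (T.erase t).Nonempty := by
    rw [← card_pos, card_erase_of_mem ht]
    omega
  have hterm : ∀ b ∈ T.erase t, ∏ j ∈ (insert t (T.erase t)).erase b, xVG n j b
      = -((∏ j ∈ (T.erase t).erase b, xVG n j b) * xVG n b t) := by
    intro b hb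
    rw [erase_insert_of_ne (ne_of_mem_erase hb).symm,
      prod_insert fun h => htT (mem_of_mem_erase h)]
    linear_combination (∏ j ∈ (T.erase t).erase b, xVG n j b) * xVG_swap b t
  rw [← insert_erase ht, sum_insert htT, erase_insert htT, sum_congr rfl hterm, sum_neg_distrib,
    sum_prod_xVG_mul_xVG hT' t]
  ring

def zStar (U : Finset (Fin (n + 1))) (a : Fin (n + 1)) : VG n := ∑ j ∈ U, xVG n j a

theorem zStar_erase_self (U : Finset (Fin (n + 1))) (a : Fin (n + 1)) :
    zStar (U.erase a) a = zStar U a :=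
  sum_erase _ (xVG_self a)

theorem zStar_pow (U : Finset (Fin (n + 1))) (a : Fin (n + 1)) (k : ℕ) :
    zStar U a ^ k = k ! • ∑ S ∈ (U.erase a).powersetCard k, ∏ j ∈ S, xVG n j a := by
  rw [← zStar_erase_self]
  exact sum_pow_eq_factorial_smul_sum_prod _ _ (fun j _ => xVG_mul_self j a) k

theorem zStar_univ_last : zStar univ (Fin.last n) = zVG n := by
  simp [zStar, zVG, Fin.sum_univ_castSucc, mk_X_eq_xVG]

theorem VGperm_zStar {U : Finset (Fin (n + 1))} {σ : Perm (Fin (n + 1))}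
    (hσ : σ ∈ fixingSubgroup (Perm (Fin (n + 1))) (U : Set (Fin (n + 1)))ᶜ) (a : Fin (n + 1)) :
    VGperm n σ (zStar U a) = zStar U (σ a) := by
  rw [zStar, map_sum]
  simp only [VGperm_xVG]
  exact Perm.sum_comp σ U (xVG n · (σ a))
    (Perm.setOf_apply_ne_subset_of_mem_fixingSubgroup_compl hσ)

theorem sum_zStar_pow_succ (U : Finset (Fin (n + 1))) (k : ℕ) :
    ∑ i ∈ U, zStar U i ^ (k + 1) = 0 := by
  simp only [zStar_pow, ← smul_sum]
  rw [sum_sum_powersetCard_erase U (k + 1) fun b S => ∏ j ∈ S, xVG n j b,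
    sum_eq_zero fun T hT => sum_prod_xVG_eq_zero (by rw [(mem_powersetCard.mp hT).2]; omega),
    smul_zero]

theorem succ_smul_sum_zStar_pow_mul {U : Finset (Fin (n + 1))} {a : Fin (n + 1)} (ha : a ∉ U)
    (k : ℕ) : (k + 1) • ∑ i ∈ U, zStar U i ^ k * xVG n i a = zStar U a ^ (k + 1) := by
  simp only [zStar_pow, smul_mul_assoc, sum_mul, ← smul_sum]
  rw [sum_sum_powersetCard_erase U k fun b S => (∏ j ∈ S, xVG n j b) * xVG n b a,
    sum_congr rfl fun T hT => sum_prod_xVG_mul_xVG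
      (card_pos.mp (by rw [(mem_powersetCard.mp hT).2]; omega)) a,
    erase_eq_of_notMem ha, smul_smul, Nat.factorial_succ]

abbrev VGavg (U : Finset (Fin (n + 1))) : VG n →ₗ[ℚ] VG n :=
  (VGrep n).subgroupAverage (fixingSubgroup (Perm (Fin (n + 1))) (U : Set (Fin (n + 1)))ᶜ)

theorem VGavg_zStar_pow_succ {U : Finset (Fin (n + 1))} {i : Fin (n + 1)} (hi : i ∈ U) (k : ℕ) :
    VGavg U (zStar U i ^ (k + 1)) = 0 := by
  rw [Representation.subgroupAverage_fixingSubgroup_compl_apply (zStar U · ^ (k + 1))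
    (fun σ hσ j _ => by rw [VGrep_apply, map_pow, VGperm_zStar hσ]) hi,
    sum_zStar_pow_succ, smul_zero]

theorem VGavg_zStar_pow_mul {U : Finset (Fin (n + 1))} {a i : Fin (n + 1)} (ha : a ∉ U)
    (hi : i ∈ U) (k : ℕ) :
    VGavg U (zStar U i ^ k * xVG n i a) = ((#U : ℚ) * (k + 1))⁻¹ • zStar U a ^ (k + 1) := by
  have hequiv : ∀ σ ∈ fixingSubgroup (Perm (Fin (n + 1))) (U : Set (Fin (n + 1)))ᶜ, ∀ j ∈ U,
      VGrep n σ (zStar U j ^ k * xVG n j a) = zStar U (σ j) ^ k * xVG n (σ j) a := by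
    intro σ hσ j _
    rw [VGrep_apply, map_mul, map_pow, VGperm_zStar hσ, VGperm_xVG,
      Perm.mem_fixingSubgroup_compl_iff.mp hσ a ha]
  rw [Representation.subgroupAverage_fixingSubgroup_compl_apply _ hequiv hi,
    ← succ_smul_sum_zStar_pow_mul ha k, ← Nat.cast_smul_eq_nsmul ℚ, smul_smul, mul_inv, mul_assoc,
    Nat.cast_succ, inv_mul_cancel₀ (by positivity), mul_one]

def VGsub (U : Finset (Fin (n + 1))) : Subalgebra ℚ (VG n) :=
  Algebra.adjoin ℚ (Set.image2 (xVG n) U U)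

theorem xVG_mem_VGsub {U : Finset (Fin (n + 1))} {i j : Fin (n + 1)} (hi : i ∈ U) (hj : j ∈ U) :
    xVG n i j ∈ VGsub U :=
  Algebra.subset_adjoin (Set.mem_image2_of_mem hi hj)

theorem VGsub_univ : VGsub (univ : Finset (Fin (n + 1))) = ⊤ := by
  rw [eq_top_iff, ← (AlgHom.range_eq_top _).mpr (Ideal.Quotient.mkₐ_surjective ℚ (VGrel n)),
    ← Algebra.map_top, ← adjoin_range_X, AlgHom.map_adjoin, Algebra.adjoin_le_iff]
  rintro _ ⟨_, ⟨v, rfl⟩, rfl⟩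
  rw [Ideal.Quotient.mkₐ_eq_mk, mk_X_eq_xVG]
  exact xVG_mem_VGsub (mem_univ _) (mem_univ _)

theorem VGsub_singleton (a : Fin (n + 1)) : VGsub {a} = (⊥ : Subalgebra ℚ (VG n)) := by
  simp [VGsub]

def VGsubExt (U : Finset (Fin (n + 1))) (a : Fin (n + 1)) : Submodule ℚ (VG n) :=
  Submodule.span ℚ ((VGsub U : Set (VG n)) * insert 1 ((xVG n · a) '' U))

theorem mem_VGsubExt_of_mem {U : Finset (Fin (n + 1))} {b : VG n} (hb : b ∈ VGsub U)
    (a : Fin (n + 1)) : b ∈ VGsubExt U a := by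
  have : b * 1 ∈ VGsubExt U a := Submodule.subset_span (Set.mul_mem_mul hb (Set.mem_insert 1 _))
  rwa [mul_one] at this

theorem mul_xVG_mem_VGsubExt {U : Finset (Fin (n + 1))} {b : VG n} (hb : b ∈ VGsub U)
    {i : Fin (n + 1)} (hi : i ∈ U) (a : Fin (n + 1)) : b * xVG n i a ∈ VGsubExt U a :=
  Submodule.subset_span (Set.mul_mem_mul hb (Set.mem_insert_of_mem _ ⟨i, hi, rfl⟩))

theorem mul_mem_VGsubExt {U : Finset (Fin (n + 1))} {a : Fin (n + 1)} {x y : VG n}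
    (hx : x ∈ VGsubExt U a) (hy : y ∈ VGsubExt U a) : x * y ∈ VGsubExt U a := by
  have hprod : ∀ b ∈ VGsub U, ∀ c ∈ insert (1 : VG n) ((xVG n · a) '' U),
      ∀ c' ∈ insert (1 : VG n) ((xVG n · a) '' U), b * (c * c') ∈ VGsubExt U a := by
    rintro b hb c (rfl | ⟨i, hi, rfl⟩) c' (rfl | ⟨j, hj, rfl⟩)
    · simpa using mem_VGsubExt_of_mem hb a
    · simpa using mul_xVG_mem_VGsubExt hb hj a
    · simpa using mul_xVG_mem_VGsubExt hb hi a
    · -- `x_{ia} x_{ja} = x_{ij} x_{ja} - x_{ij} x_{ia}`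
      have hbij := Subalgebra.mul_mem _ hb (xVG_mem_VGsub hi hj)
      convert Submodule.sub_mem _ (mul_xVG_mem_VGsubExt hbij hj a)
        (mul_xVG_mem_VGsubExt hbij hi a) using 1
      linear_combination -b * xVG_mul_xVG i j a
  have hmul : VGsubExt U a * VGsubExt U a ≤ VGsubExt U a := by
    rw [VGsubExt, Submodule.span_mul_span, Submodule.span_le]
    rintro _ ⟨_, ⟨b, hb, c, hc, rfl⟩, _, ⟨b', hb', c', hc', rfl⟩, rfl⟩
    show b * c * (b' * c') ∈ VGsubExt U a
    rw [show b * c * (b' * c') = b * b' * (c * c') by ring]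
    exact hprod _ (Subalgebra.mul_mem _ hb hb') c hc c' hc'
  exact hmul (Submodule.mul_mem_mul hx hy)

theorem VGsub_insert_le (U : Finset (Fin (n + 1))) (a : Fin (n + 1)) :
    Subalgebra.toSubmodule (VGsub (insert a U)) ≤ VGsubExt U a := by
  have hone : (1 : VG n) ∈ VGsubExt U a := mem_VGsubExt_of_mem (Subalgebra.one_mem _) a
  have hxa : ∀ i ∈ U, xVG n i a ∈ VGsubExt U a := fun i hi => by
    simpa using mul_xVG_mem_VGsubExt (Subalgebra.one_mem _) hi a
  have hle : VGsub (insert a U) ≤ (VGsubExt U a).toSubalgebra hone fun _ _ => mul_mem_VGsubExt := by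
    refine Algebra.adjoin_le ?_
    rintro _ ⟨i, hi, j, hj, rfl⟩
    simp only [coe_insert, Set.mem_insert_iff, mem_coe] at hi hj
    show xVG n i j ∈ VGsubExt U a
    rcases hi with rfl | hi <;> rcases hj with rfl | hj
    · simp
    · rw [xVG_swap]
      exact Submodule.neg_mem _ (hxa j hj)
    · exact hxa i hi
    · exact mem_VGsubExt_of_mem (xVG_mem_VGsub hi hj) a
  exact hle

theorem VGavg_algebraMap (U : Finset (Fin (n + 1))) (c : ℚ) :
    VGavg U (algebraMap ℚ (VG n) c) = algebraMap ℚ (VG n) c :=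
  Representation.subgroupAverage_apply_of_forall_eq fun σ _ => (VGperm n σ).commutes c

theorem VGavg_VGavg_erase (U : Finset (Fin (n + 1))) (i : Fin (n + 1)) (y : VG n) :
    VGavg U (VGavg (U.erase i) y) = VGavg U y :=
  Representation.subgroupAverage_subgroupAverage_of_le
    (fixingSubgroup_antitone _ _ (Set.compl_subset_compl.mpr (coe_subset.mpr (erase_subset i U)))) y

theorem VGavg_mem_span_of_VGavg_erase_mem {U : Finset (Fin (n + 1))} {i : Fin (n + 1)}
    (hi : i ∈ U) (a : Fin (n + 1)) {b : VG n}
    (hb : VGavg (U.erase i) b ∈ Submodule.span ℚ (Set.range (zStar U i ^ ·))) :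
    VGavg U b ∈ Submodule.span ℚ (Set.range (zStar U a ^ ·)) := by
  rw [← VGavg_VGavg_erase U i]
  refine (Submodule.map_span_le _ _ _).mpr ?_ (Submodule.mem_map_of_mem hb)
  rintro _ ⟨_ | k, rfl⟩
  · have h1 : VGavg U 1 = 1 := by simpa using VGavg_algebraMap U 1
    show VGavg U (zStar U i ^ 0) ∈ _
    rw [pow_zero, h1]
    exact Submodule.subset_span ⟨0, pow_zero _⟩
  · simp [VGavg_zStar_pow_succ hi]

theorem VGavg_mul_xVG_mem_span {U : Finset (Fin (n + 1))} {a i : Fin (n + 1)} (ha : a ∉ U)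
    (hi : i ∈ U) {b : VG n}
    (hb : VGavg (U.erase i) b ∈ Submodule.span ℚ (Set.range (zStar U i ^ ·))) :
    VGavg U (b * xVG n i a) ∈ Submodule.span ℚ (Set.range (zStar U a ^ ·)) := by
  have hcomm : ∀ σ ∈ fixingSubgroup (Perm (Fin (n + 1))) (↑(U.erase i) : Set (Fin (n + 1)))ᶜ,
      ∀ y, LinearMap.mulRight ℚ (xVG n i a) (VGrep n σ y)
        = VGrep n σ (LinearMap.mulRight ℚ (xVG n i a) y) := by
    intro σ hσ y
    have hσ' := Perm.mem_fixingSubgroup_compl_iff.mp hσ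
    rw [LinearMap.mulRight_apply, LinearMap.mulRight_apply, VGrep_apply, VGrep_apply, map_mul,
      VGperm_xVG, hσ' i (notMem_erase i U), hσ' a fun h => ha (mem_of_mem_erase h)]
  rw [← VGavg_VGavg_erase U i, ← LinearMap.mulRight_apply (R := ℚ),
    ← Representation.map_subgroupAverage_of_commute _ hcomm]
  refine (Submodule.map_span_le ((VGavg U).comp (LinearMap.mulRight ℚ (xVG n i a))) _ _).mpr ?_
    (Submodule.mem_map_of_mem hb)
  rintro _ ⟨k, rfl⟩
  rw [LinearMap.comp_apply, LinearMap.mulRight_apply, VGavg_zStar_pow_mul ha hi]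
  exact Submodule.smul_mem _ _ (Submodule.subset_span ⟨k + 1, rfl⟩)

theorem VGavg_mem_span_of_erase {U : Finset (Fin (n + 1))} {a : Fin (n + 1)} (ha : a ∉ U)
    (ih : ∀ i ∈ U, ∀ x ∈ VGsub U,
      VGavg (U.erase i) x ∈ Submodule.span ℚ (Set.range (zStar U i ^ ·)))
    {x : VG n} (hx : x ∈ VGsub (insert a U)) :
    VGavg U x ∈ Submodule.span ℚ (Set.range (zStar U a ^ ·)) := by
  rcases U.eq_empty_or_nonempty with rfl | ⟨i₀, hi₀⟩
  · rw [insert_empty, VGsub_singleton, Algebra.mem_bot] at hx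
    obtain ⟨c, rfl⟩ := hx
    rw [VGavg_algebraMap, Algebra.algebraMap_eq_smul_one]
    exact Submodule.smul_mem _ c (Submodule.subset_span ⟨0, pow_zero _⟩)
  have hxW : x ∈ Submodule.span ℚ ((VGsub U : Set (VG n)) * insert 1 ((xVG n · a) '' U)) :=
    VGsub_insert_le U a hx
  clear hx
  induction hxW using Submodule.span_induction with
  | mem y hy =>
    obtain ⟨b, hb, c, hc, rfl⟩ := hy
    rcases hc with rfl | ⟨i, hi, rfl⟩
    · simpa using VGavg_mem_span_of_VGavg_erase_mem hi₀ a (ih i₀ hi₀ b hb)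
    · exact VGavg_mul_xVG_mem_span ha hi (ih i hi b hb)
  | zero => simp
  | add y z _ _ hy hz => simpa using Submodule.add_mem _ hy hz
  | smul c y _ hy => simpa using Submodule.smul_mem _ c hy

theorem VGavg_mem_span_zStar_pow (U : Finset (Fin (n + 1))) :
    ∀ a ∉ U, ∀ x ∈ VGsub (insert a U),
      VGavg U x ∈ Submodule.span ℚ (Set.range (zStar U a ^ ·)) := by
  induction U using Finset.strongInduction with
  | H U ih =>
    intro a ha x hx
    refine VGavg_mem_span_of_erase ha (fun i hi y hy => ?_) hx
    rw [← zStar_erase_self]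
    exact ih _ (erase_ssubset hi) i (notMem_erase i U) y (by rwa [insert_erase hi])

theorem zVG_pow_succ : zVG n ^ (n + 1) = 0 := by
  rw [← zStar_univ_last, zStar_pow, powersetCard_eq_empty.mpr (by simp), sum_empty, smul_zero]

theorem zVG_mem_VGinv : zVG n ∈ VGinv n := fun σ hσ => by
  rw [← zStar_univ_last, VGperm_zStar (Perm.mem_fixingSubgroup_compl_iff.mpr fun x hx =>
    absurd (mem_univ x) hx), hσ]

theorem VGinv_le_span_pow :
    Subalgebra.toSubmodule (VGinv n)
      ≤ Submodule.span ℚ (Set.range fun k : Fin (n + 1) => zVG n ^ (k : ℕ)) := by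
  intro x hx
  have hfix : VGavg (univ.erase (Fin.last n)) x = x :=
    Representation.subgroupAverage_apply_of_forall_eq fun σ hσ =>
      hx σ (Perm.mem_fixingSubgroup_compl_iff.mp hσ _ (notMem_erase _ _))
  have hmem := VGavg_mem_span_zStar_pow (univ.erase (Fin.last n)) _ (notMem_erase _ _) x
    (by rw [insert_erase (mem_univ _), VGsub_univ]; trivial)
  rwa [hfix, zStar_erase_self, zStar_univ_last,
    span_range_pow_eq_of_pow_succ_eq_zero zVG_pow_succ] at hmem

def sqZeroIdeal (n : ℕ) : Ideal (MvPolynomial (Fin (n + 1)) ℚ) :=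
  Ideal.span (Set.range fun i => X i ^ 2)

def signedX (i j : Fin (n + 1)) : MvPolynomial (Fin (n + 1)) ℚ := if i < j then X i else -X j

theorem VGrel_le_comap_sqZeroIdeal :
    VGrel n ≤ (sqZeroIdeal n).comap (aeval fun v : VGidx n => signedX v.1.1 v.1.2) := by
  have hsq : ∀ m : Fin (n + 1), X m ^ 2 ∈ sqZeroIdeal n := fun m => Ideal.subset_span ⟨m, rfl⟩
  -- each defining relation is sent to `0`, `X m ^ 2` or `-X m ^ 2`
  refine Ideal.span_le.mpr ?_
  rintro _ ((⟨⟨⟨i, j⟩, hij⟩, rfl⟩ | ⟨i, j, hij, rfl⟩) | ⟨i, j, k, hij, hjk, hki, rfl⟩) <;>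
    simp only [SetLike.mem_coe, Ideal.mem_comap, map_add, map_mul, map_pow, aeval_X, signedX]
  · split_ifs
    · exact hsq i
    · simpa using hsq j
  · split_ifs <;> first | omega | simp
  · split_ifs <;> first
      | omega
      | (convert (sqZeroIdeal n).neg_mem (hsq i) using 1; ring1)
      | (convert (sqZeroIdeal n).neg_mem (hsq j) using 1; ring1)
      | (convert (sqZeroIdeal n).neg_mem (hsq k) using 1; ring1)

def toSqZero (n : ℕ) : VG n →ₐ[ℚ] MvPolynomial (Fin (n + 1)) ℚ ⧸ sqZeroIdeal n :=
  Ideal.quotientMapₐ _ (aeval fun v : VGidx n => signedX v.1.1 v.1.2) VGrel_le_comap_sqZeroIdeal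

theorem toSqZero_zVG :
    toSqZero n (zVG n) = ∑ i : Fin n, Ideal.Quotient.mk (sqZeroIdeal n) (X i.castSucc) := by
  simp [toSqZero, zVG, Ideal.quotientMapₐ, signedX, Fin.castSucc_lt_last]

theorem zVG_pow_ne_zero : zVG n ^ n ≠ 0 := by
  intro h
  have hmk : ∀ i : Fin n, Ideal.Quotient.mk (sqZeroIdeal n) (X i.castSucc)
      * Ideal.Quotient.mk (sqZeroIdeal n) (X i.castSucc) = 0 := fun i => by
    rw [← map_mul, ← sq, Ideal.Quotient.eq_zero_iff_mem]
    exact Ideal.subset_span ⟨_, rfl⟩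
  have hpow : powersetCard n (univ : Finset (Fin n)) = {univ} := by
    simpa using powersetCard_self (univ : Finset (Fin n))
  have := congrArg (toSqZero n) h
  rw [map_pow, map_zero, toSqZero_zVG, sum_pow_eq_factorial_smul_sum_prod _ _ fun i _ => hmk i,
    hpow, sum_singleton, ← map_prod, ← Nat.cast_smul_eq_nsmul ℚ, smul_eq_zero, Ideal.Quotient.eq_zero_iff_mem] at this
  rcases this with h | h
  · exact Nat.factorial_ne_zero n (by exact_mod_cast h)
  · exact prod_X_notMem_span_X_sq (univ.map Fin.castSuccEmb) (by simpa [sqZeroIdeal] using h)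

theorem finrank_VGinv_general (n : ℕ) : Module.finrank ℚ (VGinv n) = n + 1 := by
  have hspan : Subalgebra.toSubmodule (VGinv n)
      = Submodule.span ℚ (Set.range fun k : Fin (n + 1) => zVG n ^ (k : ℕ)) :=
    le_antisymm VGinv_le_span_pow <| Submodule.span_le.mpr <| Set.range_subset_iff.mpr fun k =>
      pow_mem zVG_mem_VGinv _
  rw [← Subalgebra.finrank_toSubmodule, hspan,
    finrank_span_eq_card (linearIndependent_pow_of_pow_succ_eq_zero zVG_pow_succ zVG_pow_ne_zero),
    Fintype.card_fin]

/-- For every integer `n ≥ 2`, the `ℚ`-vector space `VG_n^{S_n}` has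
dimension `n + 1`. -/
theorem finrank_VGinv (n : ℕ) (hn : 2 ≤ n) : Module.finrank ℚ (VGinv n) = n + 1 :=
  finrank_VGinv_general n

end
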